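/- arXiv:2604.06879 — 2 statements merged into one kernel-verified Lean document; each statement's English description precedes it below -/
import Mathlib

section
/- The read-before-write memory cell is coherent: the single-clock CCSˡᵐ process S defined by S ≝ w:{w}.S + r:{w}.S + σ:{r,w}.S is coherent modulo strong bisimilarity. In particular S is observable, its only derivative is S itself, the only pairs of independent transitions of S are the r-transition paired with itself and the σ-transition paired with itself, and both admit reconvergences with identical strategic labels. -/
namespace CCSlm

/-- Labels 𝓛 = R ∪ {σ}: channel names with polarity (rendezvous actions) plus the single clock σ. -/
inductive Label (Name : Type) : Type
  | pos : Name → Label Name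
  | neg : Name → Label Name
  | clock : Label Name

/-- Complementation ℓ ↦ ℓ̄ (an involution, with σ̄ = σ). -/
def Label.bar {Name : Type} : Label Name → Label Name
  | .pos a => .neg a
  | .neg a => .pos a
  | .clock => .clock

/-- Actions Act = 𝓛 ∪ {τ}. -/
inductive Act (Name : Type) : Type
  | lab : Label Name → Act Name
  | tau : Act Name

/-- The (at most one) label of an action, as a set. -/
def Act.labels {Name : Type} : Act Name → Set (Label Name)
  | .lab ℓ => {ℓ}
  | .tau => ∅

/-- α ∈ R (α is a rendezvous action). -/
def Act.isRendezvous {Name : Type} : Act Name → Prop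
  | .lab .clock => False
  | .tau => False
  | .lab _ => True

/-- α ∈ R ∪ {τ}. -/
def Act.isRendezvousOrTau {Name : Type} : Act Name → Prop
  | .lab .clock => False
  | _ => True

/-- Clock horizons H = {⊥,⊤}, as `Bool` (`false` = ⊥ = ∅, `true` = ⊤ = {σ}), ordered by `≤`. -/
abbrev Horizon : Type := Bool

/-- Blocking relations B ⊆ H × 2^𝓛. -/
abbrev Blocking (Name : Type) : Type := Set (Horizon × Set (Label Name))

/-- Predictions ι : H → 2^𝓛. -/
abbrev Pred (Name : Type) : Type := Horizon → Set (Label Name)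

variable {Name PName : Type}

/-- The induced blocking function [B](C) = { ℓ | ∃(C′,L′) ∈ B, C′ ⊆ C, ℓ ∈ L′ }. -/
def blockSet (B : Blocking Name) (C : Horizon) : Set (Label Name) :=
  { ℓ | ∃ C' L, (C', L) ∈ B ∧ C' ≤ C ∧ ℓ ∈ L }

/-- B′ ⊑ B iff [B′](C) ⊆ [B](C) for all C. -/
def bleq (B' B : Blocking Name) : Prop :=
  ∀ C : Horizon, blockSet B' C ⊆ blockSet B C

/-- ι′ ⊑ ι iff ι′(C) ⊆ ι(C) for all C. -/
def pleq (ι' ι : Pred Name) : Prop :=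
  ∀ C : Horizon, ι' C ⊆ ι C

/-- Pointwise union ι1 + ι2 of predictions. -/
def predAdd (ι1 ι2 : Pred Name) : Pred Name := fun C => ι1 C ∪ ι2 C

/-- The empty prediction ι^∅. -/
def emptyPred : Pred Name := fun _ => ∅

/-- eschews(ι, B): for all (C,L′) ∈ B, ι(C) ∩ {ℓ̄ | ℓ ∈ L′} = ∅. -/
def eschews (ι : Pred Name) (B : Blocking Name) : Prop :=
  ∀ C L, (C, L) ∈ B → ι C ∩ (Label.bar '' L) = ∅

/-- Process terms of single-clock CCSˡᵐ (threads are merged into the process grammar):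
process names, parallel composition, restriction, inactive 0_C, prefix α:L′.P, and sum. -/
inductive Proc (Name PName : Type) : Type
  | name : PName → Proc Name PName
  | par : Proc Name PName → Proc Name PName → Proc Name PName
  | restr : Proc Name PName → Set Name → Proc Name PName
  | nil : Horizon → Proc Name PName
  | pre : Act Name → Set (Label Name) → Proc Name PName → Proc Name PName
  | sum : Proc Name PName → Proc Name PName → Proc Name PName

/-- The labels A′ ∪ Ā′ of a set A′ of channel names. -/
def chanLabels (A : Set Name) : Set (Label Name) :=
  { ℓ | ∃ a ∈ A, ℓ = .pos a ∨ ℓ = .neg a }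

/-- σ ∈ 𝓛(P): the clock occurs free in P (through unfolding of process names). -/
inductive HasClock (env : PName → Proc Name PName) : Proc Name PName → Prop
  | nil : HasClock env (.nil true)
  | preClock (L : Set (Label Name)) (P : Proc Name PName) :
      HasClock env (.pre (.lab .clock) L P)
  | preCont {P : Proc Name PName} (α : Act Name) (L : Set (Label Name)) :
      HasClock env P → HasClock env (.pre α L P)
  | parL {P : Proc Name PName} (Q : Proc Name PName) :
      HasClock env P → HasClock env (.par P Q)
  | parR (P : Proc Name PName) {Q : Proc Name PName} :
      HasClock env Q → HasClock env (.par P Q)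
  | sumL {M : Proc Name PName} (N : Proc Name PName) :
      HasClock env M → HasClock env (.sum M N)
  | sumR (M : Proc Name PName) {N : Proc Name PName} :
      HasClock env N → HasClock env (.sum M N)
  | restr {P : Proc Name PName} (A : Set Name) :
      HasClock env P → HasClock env (.restr P A)
  | name (p : PName) : HasClock env (env p) → HasClock env (.name p)

open Classical in
/-- The clock horizon clk(P) = 𝓛(P) ∩ {σ} ∈ H. -/
noncomputable def clk (env : PName → Proc Name PName) (P : Proc Name PName) : Horizon :=
  if HasClock env P then true else false

/-- Initial actions iA of a thread (as a set of labels; τ contributes nothing to predictions). -/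
def iA : Proc Name PName → Set (Label Name)
  | .pre α _ _ => α.labels
  | .sum M N => iA M ∪ iA N
  | _ => ∅

/-- One level of the bounded syntactic prediction; `rec` handles process names
(it is the bounded prediction at the next-lower unfolding bound). -/
def wilAgo (env : PName → Proc Name PName)
    (rec : Horizon → Proc Name PName → Set (Label Name)) :
    Horizon → Proc Name PName → Set (Label Name)
  | _, .nil _ => ∅
  | C, .pre (.lab .clock) _ P =>
      if C = true then {Label.clock} else insert Label.clock (wilAgo env rec C P)
  | C, .pre α _ P => α.labels ∪ wilAgo env rec C P
  | C, .restr P A => wilAgo env rec C P \ chanLabels A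
  | C, .name p => rec C (env p)
  | C, .par P Q => wilAgo env rec C P ∪ wilAgo env rec C Q
  | C, .sum M N => wilAgo env rec C M ∪ wilAgo env rec C N

/-- The bounded syntactic prediction wilAⁿ_C(P) with at most n unfoldings of process names. -/
def wilA (env : PName → Proc Name PName) : ℕ → Horizon → Proc Name PName → Set (Label Name)
  | 0 => wilAgo env fun _ _ => ∅
  | n + 1 => wilAgo env (wilA env n)

/-- iA*_C(P) = ⋃ₙ wilAⁿ_C(P): the labels occurring syntactically in P before any clock in C. -/
def iAstar (env : PName → Proc Name PName) (C : Horizon) (P : Proc Name PName) :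
    Set (Label Name) :=
  ⋃ n : ℕ, wilA env n C P

/-- The prediction iA*₋(P) : C ↦ iA*_C(P). -/
def iAstarPred (env : PName → Proc Name PName) (P : Proc Name PName) : Pred Name :=
  fun C => iAstar env C P

/-- Restriction B↾A of a blocking relation: remove A ∪ Ā from each entry. -/
def restrB (B : Blocking Name) (A : Set Name) : Blocking Name :=
  { q | ∃ C L, (C, L) ∈ B ∧ q = (C, L \ chanLabels A) }

/-- Restriction ι↾A of a prediction: remove A ∪ Ā pointwise. -/
def restrPred (ι : Pred Name) (A : Set Name) : Pred Name :=
  fun C => ι C \ chanLabels A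

/-- Result ℓ ∥ ℓ̄ of synchronisation: a ∥ ā = τ and σ ∥ σ = σ. -/
def syncAct {Name : Type} : Label Name → Act Name
  | .clock => .lab .clock
  | _ => .tau

/-- The strategic labelled transition system of single-clock CCSˡᵐ (Fig. 1):
P —α:B[ι]→ Q. -/
inductive Step (env : PName → Proc Name PName) :
    Proc Name PName → Act Name → Blocking Name → Pred Name → Proc Name PName → Prop
  | act (α : Act Name) (L : Set (Label Name)) (P : Proc Name PName) :
      Step env (.pre α L P) α {(clk env P, L)} emptyPred P
  | sumL {M : Proc Name PName} {α : Act Name} {B : Blocking Name} {ι : Pred Name}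
      {P : Proc Name PName} (N : Proc Name PName) :
      Step env M α B ι P →
      Step env (.sum M N) α B (fun C => ι C ∪ (iA N \ α.labels)) P
  | sumR (M : Proc Name PName) {N : Proc Name PName} {α : Act Name} {B : Blocking Name}
      {ι : Pred Name} {P : Proc Name PName} :
      Step env N α B ι P →
      Step env (.sum M N) α B (fun C => ι C ∪ (iA M \ α.labels)) P
  | con {p : PName} {α : Act Name} {B : Blocking Name} {ι : Pred Name} {P' : Proc Name PName} :
      Step env (env p) α B ι P' →
      Step env (.name p) α B ι P'
  | com {P1 P2 P1' P2' : Proc Name PName} {ℓ : Label Name} {B1 B2 : Blocking Name}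
      {ι1 ι2 : Pred Name} :
      Step env P1 (.lab ℓ) B1 ι1 P1' →
      Step env P2 (.lab ℓ.bar) B2 ι2 P2' →
      eschews ι1 B2 → eschews ι2 B1 →
      Step env (.par P1 P2) (syncAct ℓ) (B1 ∪ B2) (predAdd ι1 ι2) (.par P1' P2')
  | parL {P : Proc Name PName} {α : Act Name} {B : Blocking Name} {ι : Pred Name}
      {P' : Proc Name PName} (Q : Proc Name PName) :
      Step env P α B ι P' →
      (α = .lab .clock → ¬ HasClock env Q) →
      eschews (iAstarPred env Q) B →
      Step env (.par P Q) α B (predAdd ι (iAstarPred env Q)) (.par P' Q)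
  | parR (P : Proc Name PName) {Q : Proc Name PName} {α : Act Name} {B : Blocking Name}
      {ι : Pred Name} {Q' : Proc Name PName} :
      Step env Q α B ι Q' →
      (α = .lab .clock → ¬ HasClock env P) →
      eschews (iAstarPred env P) B →
      Step env (.par P Q) α B (predAdd ι (iAstarPred env P)) (.par P Q')
  | restr {P : Proc Name PName} {α : Act Name} {B : Blocking Name} {ι : Pred Name}
      {Q : Proc Name PName} (A : Set Name) :
      Step env P α B ι Q →
      (∀ ℓ, α = .lab ℓ → ℓ ∉ chanLabels A) →
      Step env (.restr P A) α (restrB B A) (restrPred ι A) (.restr Q A)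

/-- One strategic step (labels existentially quantified). -/
def Tr (env : PName → Proc Name PName) (P Q : Proc Name PName) : Prop :=
  ∃ α B ι, Step env P α B ι Q

/-- Q is a derivative of P: reachable by strategic transitions. -/
def Deriv (env : PName → Proc Name PName) : Proc Name PName → Proc Name PName → Prop :=
  Relation.ReflTransGen (Tr env)

/-- A congruence on processes: an equivalence compatible with the process operators. -/
structure IsCongruence (cong : Proc Name PName → Proc Name PName → Prop) : Prop where
  equiv : Equivalence cong
  pre : ∀ (α : Act Name) (L : Set (Label Name)) {P P' : Proc Name PName},
      cong P P' → cong (.pre α L P) (.pre α L P')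
  sum : ∀ {M M' N N' : Proc Name PName}, cong M M' → cong N N' → cong (.sum M N) (.sum M' N')
  par : ∀ {P P' Q Q' : Proc Name PName}, cong P P' → cong Q Q' → cong (.par P Q) (.par P' Q')
  restr : ∀ (A : Set Name) {P P' : Proc Name PName}, cong P P' → cong (.restr P A) (.restr P' A)

/-- P is observable (modulo cong). -/
def Observable (env : PName → Proc Name PName)
    (cong : Proc Name PName → Proc Name PName → Prop) (P : Proc Name PName) : Prop :=
  ∀ Q Q1 Q2 α1 α2 B1 B2 ι1 ι2,
    Deriv env P Q →
    Step env Q α1 B1 ι1 Q1 → Step env Q α2 B2 ι2 Q2 →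
    (α1 ≠ α2 ∨ ¬ cong Q1 Q2) →
    ∀ ℓ1 ℓ2 : Label Name, α1 = .lab ℓ1 → α2 = .lab ℓ2 → ℓ1 ∈ ι2 true ∧ ℓ2 ∈ ι1 true

/-- α ∉ [B](⊤). -/
def unblockedBy (α : Act Name) (B : Blocking Name) : Prop :=
  ∀ ℓ : Label Name, α = .lab ℓ → ℓ ∉ blockSet B true

/-- Independence (modulo cong) of two transitions out of the same process. -/
def Independent (cong : Proc Name PName → Proc Name PName → Prop)
    (α1 : Act Name) (B1 : Blocking Name) (Q1 : Proc Name PName)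
    (α2 : Act Name) (B2 : Blocking Name) (Q2 : Proc Name PName) : Prop :=
  (α1 = .lab .clock ∧ α2 = .lab .clock) ∨
  (α1.isRendezvousOrTau ∧ α2.isRendezvousOrTau ∧
    ((¬ (α1 = .tau ∧ α2 = .tau) ∧ unblockedBy α1 B2 ∧ unblockedBy α2 B1) ∨
     (α1 = α2 ∧ ¬ cong Q1 Q2)))

/-- The Diamond Property (CR) of a process Q (modulo cong). -/
def DiamondCR (env : PName → Proc Name PName)
    (cong : Proc Name PName → Proc Name PName → Prop) (Q : Proc Name PName) : Prop :=
  ∀ α1 B1 ι1 Q1 α2 B2 ι2 Q2,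
    Step env Q α1 B1 ι1 Q1 → Step env Q α2 B2 ι2 Q2 →
    Independent cong α1 B1 Q1 α2 B2 Q2 →
    ∃ Q1' Q2' B1' ι1' B2' ι2',
      cong Q1' Q2' ∧
      Step env Q1 α2 B2' ι2' Q1' ∧ Step env Q2 α1 B1' ι1' Q2' ∧
      bleq B1' B1 ∧ bleq B2' B2 ∧
      (α1.isRendezvous → pleq ι1' ι1) ∧ (α2.isRendezvous → pleq ι2' ι2)

/-- P is coherent (modulo cong): observable and every derivative satisfies (CR). -/
def Coherent (env : PName → Proc Name PName)
    (cong : Proc Name PName → Proc Name PName → Prop) (P : Proc Name PName) : Prop :=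
  Observable env cong P ∧ ∀ Q, Deriv env P Q → DiamondCR env cong Q

/-- N is a normal form: no τ-transitions. -/
def NormalForm (env : PName → Proc Name PName) (N : Proc Name PName) : Prop :=
  ∀ B ι N', ¬ Step env N .tau B ι N'

/-- One reduction (τ-labelled) step. -/
def Red (env : PName → Proc Name PName) (P Q : Proc Name PName) : Prop :=
  ∃ B ι, Step env P .tau B ι Q

/-- P ⇓ N: P reduces to the normal form N by finitely many τ-steps. -/
def ReducesTo (env : PName → Proc Name PName) (P N : Proc Name PName) : Prop :=
  Relation.ReflTransGen (Red env) P N ∧ NormalForm env N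

/-- Strong bisimulations for the strategic LTS (matching full strategic labels). -/
def IsStrategicBisim (env : PName → Proc Name PName)
    (R : Proc Name PName → Proc Name PName → Prop) : Prop :=
  ∀ P Q, R P Q →
    (∀ α B ι P', Step env P α B ι P' → ∃ Q', Step env Q α B ι Q' ∧ R P' Q') ∧
    (∀ α B ι Q', Step env Q α B ι Q' → ∃ P', Step env P α B ι P' ∧ R P' Q')

/-- Strong bisimilarity for the strategic LTS. -/
def StrategicBisim (env : PName → Proc Name PName) (P Q : Proc Name PName) : Prop :=
  ∃ R, IsStrategicBisim env R ∧ R P Q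

/-- Milner's CCS labelled transition system P —α→ Q on the same syntax. -/
inductive CCSStep (env : PName → Proc Name PName) :
    Proc Name PName → Act Name → Proc Name PName → Prop
  | act (α : Act Name) (L : Set (Label Name)) (P : Proc Name PName) :
      CCSStep env (.pre α L P) α P
  | sumL {M : Proc Name PName} {α : Act Name} {P : Proc Name PName} (N : Proc Name PName) :
      CCSStep env M α P → CCSStep env (.sum M N) α P
  | sumR (M : Proc Name PName) {N : Proc Name PName} {α : Act Name} {P : Proc Name PName} :
      CCSStep env N α P → CCSStep env (.sum M N) α P
  | con {p : PName} {α : Act Name} {P' : Proc Name PName} :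
      CCSStep env (env p) α P' → CCSStep env (.name p) α P'
  | com {P1 P2 P1' P2' : Proc Name PName} (ℓ : Label Name) :
      CCSStep env P1 (.lab ℓ) P1' → CCSStep env P2 (.lab ℓ.bar) P2' →
      CCSStep env (.par P1 P2) .tau (.par P1' P2')
  | parL {P : Proc Name PName} {α : Act Name} {P' : Proc Name PName} (Q : Proc Name PName) :
      CCSStep env P α P' → CCSStep env (.par P Q) α (.par P' Q)
  | parR (P : Proc Name PName) {Q : Proc Name PName} {α : Act Name} {Q' : Proc Name PName} :
      CCSStep env Q α Q' → CCSStep env (.par P Q) α (.par P Q')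
  | restr {P : Proc Name PName} {α : Act Name} {Q : Proc Name PName} (A : Set Name) :
      CCSStep env P α Q → (∀ ℓ, α = .lab ℓ → ℓ ∉ chanLabels A) →
      CCSStep env (.restr P A) α (.restr Q A)

def CCSTr (env : PName → Proc Name PName) (P Q : Proc Name PName) : Prop :=
  ∃ α, CCSStep env P α Q

def CCSDeriv (env : PName → Proc Name PName) : Proc Name PName → Proc Name PName → Prop :=
  Relation.ReflTransGen (CCSTr env)

/-- Strong bisimulations for Milner's CCS LTS. -/
def IsCCSBisim (env : PName → Proc Name PName)
    (R : Proc Name PName → Proc Name PName → Prop) : Prop :=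
  ∀ P Q, R P Q →
    (∀ α P', CCSStep env P α P' → ∃ Q', CCSStep env Q α Q' ∧ R P' Q') ∧
    (∀ α Q', CCSStep env Q α Q' → ∃ P', CCSStep env P α P' ∧ R P' Q')

/-- Strong bisimilarity ∼ for Milner's CCS. -/
def CCSBisim (env : PName → Proc Name PName) (P Q : Proc Name PName) : Prop :=
  ∃ R, IsCCSBisim env R ∧ R P Q

/-- P is determinate (modulo ∼) in Milner's CCS. -/
def CCSDeterminate (env : PName → Proc Name PName) (P : Proc Name PName) : Prop :=
  ∀ Q, CCSDeriv env P Q → ∀ α Q1 Q2,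
    CCSStep env Q α Q1 → CCSStep env Q α Q2 → CCSBisim env Q1 Q2

/-- P is strongly confluent (modulo ∼) in Milner's CCS. -/
def CCSStronglyConfluent (env : PName → Proc Name PName) (P : Proc Name PName) : Prop :=
  CCSDeterminate env P ∧
  ∀ Q, CCSDeriv env P Q → ∀ α1 α2 Q1 Q2, α1 ≠ α2 →
    CCSStep env Q α1 Q1 → CCSStep env Q α2 Q2 →
    ∃ Q1' Q2', CCSBisim env Q1' Q2' ∧ CCSStep env Q1 α2 Q1' ∧ CCSStep env Q2 α1 Q2'

/-- The clock-free, priority-free fragment: inactive subterms are 0_⊥, no prefix action is σ,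
and all blocking sets are empty. -/
def ClockFree : Proc Name PName → Prop
  | .nil C => C = false
  | .pre α L P => α ≠ .lab .clock ∧ L = ∅ ∧ ClockFree P
  | .sum M N => ClockFree M ∧ ClockFree N
  | .par P Q => ClockFree P ∧ ClockFree Q
  | .restr P _ => ClockFree P
  | .name _ => True

/-- Well-formedness: direct subprocesses of threads have the same clock horizon as the thread. -/
def WF (env : PName → Proc Name PName) : Proc Name PName → Prop
  | .nil _ => True
  | .pre α L P => WF env P ∧ (HasClock env (.pre α L P) ↔ HasClock env P)
  | .sum M N => WF env M ∧ WF env N ∧ (HasClock env M ↔ HasClock env N)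
  | .par P Q => WF env P ∧ WF env Q
  | .restr P _ => WF env P
  | .name _ => True

/-- P has exactly one derivable strategic transition, namely α to Q (with some label B[ι]). -/
def UniqueStep (env : PName → Proc Name PName) (P : Proc Name PName) (α : Act Name)
    (Q : Proc Name PName) : Prop :=
  ∃ B ι, Step env P α B ι Q ∧
    ∀ α' B' ι' Q', Step env P α' B' ι' Q' → α' = α ∧ B' = B ∧ ι' = ι ∧ Q' = Q

end CCSlm

namespace CCSlm

/-- Channel names r and w. -/
inductive CH : Type
  | r
  | w

/-- A single process name S. -/
inductive PN : Type
  | S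

def rLab : Label CH := .pos .r
def wLab : Label CH := .pos .w

/-- The body of S ≝ w:{w}.S + r:{w}.S + σ:{r,w}.S. -/
def Sbody : Proc CH PN :=
  .sum (.pre (.lab wLab) {wLab} (.name .S))
    (.sum (.pre (.lab rLab) {wLab} (.name .S))
      (.pre (.lab .clock) {rLab, wLab} (.name .S)))

def envS : PN → Proc CH PN := fun _ => Sbody

/-!
Every transition of `S` leads back to `S`, so `S` is its only derivative and any two of its
transitions reconverge by performing one another, with identical strategic labels.
Observability holds because the sum rule predicts the initial actions of the discarded
summands. Every pair involving `w` is dependent, because both rendezvous transitions of `S`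
block `w`.
-/

section SelfLoop

variable {Name PName : Type} {env : PName → Proc Name PName}

theorem StrategicBisim.refl (P : Proc Name PName) : StrategicBisim env P P :=
  ⟨Eq, by rintro P _ rfl; exact ⟨fun _ _ _ P' h => ⟨P', h, rfl⟩, fun _ _ _ Q' h => ⟨Q', h, rfl⟩⟩,
    rfl⟩

theorem unblockedBy_lab_singleton_iff {ℓ : Label Name} {C : Horizon} {L : Set (Label Name)} :
    unblockedBy (.lab ℓ) {(C, L)} ↔ ℓ ∉ L := by
  simp [unblockedBy, blockSet]

theorem Step.of_name {p : PName} {α : Act Name} {B : Blocking Name} {ι : Pred Name}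
    {Q : Proc Name PName} (h : Step env (.name p) α B ι Q) : Step env (env p) α B ι Q := by
  cases h with
  | con h => exact h

/-- A transition predicts every other initial action of its source: the rule for sums adds
the initial actions of the discarded summand, and no other rule starts from a process with
initial actions. -/
theorem Step.iA_diff_subset {M P : Proc Name PName} {α : Act Name} {B : Blocking Name}
    {ι : Pred Name} (h : Step env M α B ι P) (C : Horizon) : iA M \ α.labels ⊆ ι C := by
  induction h with
  | act => simp [iA]
  | sumL N _ ih =>
    rw [iA, Set.union_sdiff_distrib]
    exact Set.union_subset_union_left _ ih
  | sumR M _ ih =>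
    rw [iA, Set.union_sdiff_distrib, Set.union_comm]
    exact Set.union_subset_union_left _ ih
  | _ => simp [iA]

variable {P : Proc Name PName} (hP : ∀ α B ι Q, Step env P α B ι Q → Q = P)
include hP

theorem Deriv.eq_of_forall_step_eq {Q : Proc Name PName} (h : Deriv env P Q) : Q = P := by
  induction h with
  | refl => rfl
  | tail _ hstep ih =>
    subst ih
    obtain ⟨α, B, ι, h⟩ := hstep
    exact hP _ _ _ _ h

theorem exists_reconvergence_of_forall_step_eq {cong : Proc Name PName → Proc Name PName → Prop}
    (hcong : ∀ P, cong P P) {α1 α2 : Act Name} {B1 B2 : Blocking Name} {ι1 ι2 : Pred Name}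
    {Q1 Q2 : Proc Name PName} (h1 : Step env P α1 B1 ι1 Q1) (h2 : Step env P α2 B2 ι2 Q2) :
    ∃ Q1' Q2', cong Q1' Q2' ∧ Step env Q1 α2 B2 ι2 Q1' ∧ Step env Q2 α1 B1 ι1 Q2' := by
  obtain rfl := hP _ _ _ _ h1
  obtain rfl := hP _ _ _ _ h2
  exact ⟨_, _, hcong _, h2, h1⟩

theorem diamondCR_of_forall_step_eq {cong : Proc Name PName → Proc Name PName → Prop}
    (hcong : ∀ P, cong P P) : DiamondCR env cong P := by
  intro α1 B1 ι1 Q1 α2 B2 ι2 Q2 h1 h2 _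
  obtain ⟨Q1', Q2', hc, h1', h2'⟩ := exists_reconvergence_of_forall_step_eq hP hcong h1 h2
  exact ⟨Q1', Q2', B1, ι1, B2, ι2, hc, h1', h2', fun _ => subset_rfl, fun _ => subset_rfl,
    fun _ _ => subset_rfl, fun _ _ => subset_rfl⟩

theorem observable_of_forall_step_eq {cong : Proc Name PName → Proc Name PName → Prop}
    (hcong : ∀ P, cong P P)
    (hpred : ∀ ℓ ℓ' B B' ι ι' Q Q', Step env P (.lab ℓ) B ι Q → Step env P (.lab ℓ') B' ι' Q' →
      ℓ ≠ ℓ' → ℓ' ∈ ι true) :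
    Observable env cong P := by
  intro Q Q1 Q2 α1 α2 B1 B2 ι1 ι2 hQ h1 h2 hdiff ℓ1 ℓ2 rfl rfl
  obtain rfl := hQ.eq_of_forall_step_eq hP
  have hne : ℓ1 ≠ ℓ2 := by
    rintro rfl
    obtain rfl := hP _ _ _ _ h1
    obtain rfl := hP _ _ _ _ h2
    exact hdiff.elim (· rfl) (· (hcong _))
  exact ⟨hpred _ _ _ _ _ _ _ _ h2 h1 hne.symm, hpred _ _ _ _ _ _ _ _ h1 h2 hne⟩

end SelfLoop

theorem step_S_cases {α : Act CH} {B : Blocking CH} {ι : Pred CH} {Q : Proc CH PN}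
    (h : Step envS (.name .S) α B ι Q) :
    Q = .name .S ∧
      (α = .lab wLab ∧ B = {(true, {wLab})} ∨ α = .lab rLab ∧ B = {(true, {wLab})} ∨
        α = .lab .clock ∧ B = {(true, {rLab, wLab})}) := by
  have hclk : clk envS (.name PN.S) = true :=
    if_pos (.name _ (.sumR _ (.sumR _ (.preClock _ _))))
  cases h.of_name with
  | sumL _ h => cases h; simp [hclk]
  | sumR _ h =>
    cases h with
    | sumL _ h => cases h; simp [hclk]
    | sumR _ h => cases h; simp [hclk]

theorem step_S_target : ∀ α B ι Q, Step envS (.name PN.S) α B ι Q → Q = .name PN.S :=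
  fun _ _ _ _ h => (step_S_cases h).1

theorem observable_S : Observable envS (StrategicBisim envS) (.name PN.S) := by
  refine observable_of_forall_step_eq step_S_target StrategicBisim.refl ?_
  intro ℓ ℓ' B B' ι ι' Q Q' h h' hne
  have hℓ' : ℓ' ∈ iA Sbody := by
    rcases (step_S_cases h').2 with ⟨he, -⟩ | ⟨he, -⟩ | ⟨he, -⟩ <;> cases he <;>
      simp [Sbody, iA, Act.labels]
  exact h.of_name.iA_diff_subset true ⟨hℓ', by simpa [Act.labels] using hne.symm⟩

theorem independent_S_cases {α1 α2 : Act CH} {B1 B2 : Blocking CH} {ι1 ι2 : Pred CH}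
    {Q1 Q2 : Proc CH PN} (h1 : Step envS (.name .S) α1 B1 ι1 Q1)
    (h2 : Step envS (.name .S) α2 B2 ι2 Q2)
    (hind : Independent (StrategicBisim envS) α1 B1 Q1 α2 B2 Q2) :
    (α1 = .lab rLab ∧ α2 = .lab rLab) ∨ (α1 = .lab .clock ∧ α2 = .lab .clock) := by
  obtain ⟨rfl, hc1⟩ := step_S_cases h1
  obtain ⟨rfl, hc2⟩ := step_S_cases h2
  rcases hind with hclk | ⟨hrt1, hrt2, ⟨-, hub1, hub2⟩ | ⟨-, hnb⟩⟩
  · exact .inr hclk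
  · rcases hc1 with ⟨rfl, rfl⟩ | ⟨rfl, rfl⟩ | ⟨rfl, -⟩ <;>
      rcases hc2 with ⟨rfl, rfl⟩ | ⟨rfl, rfl⟩ | ⟨rfl, -⟩ <;>
      simp_all [unblockedBy_lab_singleton_iff, Act.isRendezvousOrTau]
  · exact (hnb (StrategicBisim.refl _)).elim

/-- The read-before-write memory cell S ≝ w:{w}.S + r:{w}.S + σ:{r,w}.S is coherent modulo
strong bisimilarity; in particular it is observable, its only derivative is S itself, the
only pairs of independent transitions are the r-transition with itself and the σ-transition
with itself, and both admit reconvergences with identical strategic labels. -/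
theorem read_before_write_cell_coherent :
    Coherent envS (StrategicBisim envS) (.name PN.S) ∧
    Observable envS (StrategicBisim envS) (.name PN.S) ∧
    (∀ Q, Deriv envS (.name PN.S) Q → Q = .name PN.S) ∧
    (∃ Br ιr, Step envS (.name PN.S) (.lab rLab) Br ιr (.name PN.S) ∧
      Independent (StrategicBisim envS) (.lab rLab) Br (.name PN.S)
        (.lab rLab) Br (.name PN.S)) ∧
    (∃ Bσ ισ, Step envS (.name PN.S) (.lab .clock) Bσ ισ (.name PN.S) ∧
      Independent (StrategicBisim envS) (.lab .clock) Bσ (.name PN.S)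
        (.lab .clock) Bσ (.name PN.S)) ∧
    (∀ α1 B1 ι1 Q1 α2 B2 ι2 Q2,
      Step envS (.name PN.S) α1 B1 ι1 Q1 →
      Step envS (.name PN.S) α2 B2 ι2 Q2 →
      Independent (StrategicBisim envS) α1 B1 Q1 α2 B2 Q2 →
      (((α1 = .lab rLab ∧ α2 = .lab rLab) ∨ (α1 = .lab .clock ∧ α2 = .lab .clock)) ∧
        ∃ Q1' Q2', StrategicBisim envS Q1' Q2' ∧
          Step envS Q1 α2 B2 ι2 Q1' ∧ Step envS Q2 α1 B1 ι1 Q2')) := by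
  have hderiv : ∀ Q, Deriv envS (.name PN.S) Q → Q = .name PN.S :=
    fun _ hQ => hQ.eq_of_forall_step_eq step_S_target
  refine ⟨⟨observable_S, fun Q hQ => hderiv Q hQ ▸ diamondCR_of_forall_step_eq step_S_target
    StrategicBisim.refl⟩, observable_S, hderiv, ?_, ?_, fun _ _ _ _ _ _ _ _ h1 h2 hind =>
    ⟨independent_S_cases h1 h2 hind,
      exists_reconvergence_of_forall_step_eq step_S_target StrategicBisim.refl h1 h2⟩⟩
  · have hr : Step envS (.name PN.S) (.lab rLab) _ _ (.name PN.S) :=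
      .con (.sumR _ (.sumL _ (.act _ {wLab} _)))
    obtain ⟨-, ⟨⟨⟩, -⟩ | ⟨-, hB⟩ | ⟨⟨⟩, -⟩⟩ := step_S_cases hr
    have hunb : unblockedBy (.lab rLab) {(clk envS (.name PN.S), {wLab})} := by
      rw [hB, unblockedBy_lab_singleton_iff]
      simp [rLab, wLab]
    exact ⟨_, _, hr, .inr ⟨trivial, trivial, .inl ⟨by simp, hunb, hunb⟩⟩⟩
  · exact ⟨_, _, .con (.sumR _ (.sumR _ (.act _ {rLab, wLab} _))), .inl ⟨rfl, rfl⟩⟩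

end CCSlm
end

section
/- Write-before-read scheduling: for the memory cell S ≝ w:{w}.S + r:{w}.S + σ:{r,w}.S, the reader R ≝ r̄.0_⊤ and the writer W ≝ w̄.0_⊤ of single-clock CCSˡᵐ, the process (R ∥ W ∥ S)↾{r,w} has exactly one derivable strategic transition, namely a τ-transition arising from the synchronization of W's w̄ with S's w (the read synchronization is blocked because w̄ occurs in the writer's prediction and w blocks r, and the clock σ is blocked because r̄ and w̄ occur in the predictions of R and W). -/
namespace CCSlm

/-- The reader R ≝ r̄.0_⊤. -/
def Rd : Proc CH PN := .pre (.lab (.neg .r)) ∅ (.nil true)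

/-- The writer W ≝ w̄.0_⊤. -/
def Wr : Proc CH PN := .pre (.lab (.neg .w)) ∅ (.nil true)

/-- (R ∥ W ∥ S)↾{r,w}. -/
def RWS : Proc CH PN := .restr (.par Rd (.par Wr (.name .S))) {CH.r, CH.w}

/-- The target of the write synchronisation: (R ∥ 0_⊤ ∥ S)↾{r,w}. -/
def RWS' : Proc CH PN := .restr (.par Rd (.par (.nil true) (.name .S))) {CH.r, CH.w}


/-!
Every transition of the cell `S` blocks `w`, while `w̄` is in the prediction of the writer
`W`; so `W ∥ S` admits no asynchronous move of `S` alone, in particular neither its read nor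
its clock step. What is left of `W ∥ S` is the solo `w̄` of `W`, which the restriction prunes,
and the synchronisation of `w̄` with `S`'s `w`, which `R` does not obstruct since its prediction
is just `r̄`. On the other side `R` can only offer `r̄`, which is restricted, and `W ∥ S` has no
`r` to synchronise with.
-/

section General

variable {Name PName : Type} {env : PName → Proc Name PName}

lemma clk_of_hasClock {P : Proc Name PName} (h : HasClock env P) : clk env P = true :=
  if_pos h

lemma Step.act_of_hasClock (α : Act Name) (L : Set (Label Name)) {P : Proc Name PName}
    (h : HasClock env P) : Step env (.pre α L P) α {(true, L)} emptyPred P :=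
  clk_of_hasClock h ▸ Step.act α L P

lemma Step.pre_inv {α α' : Act Name} {L : Set (Label Name)} {B : Blocking Name}
    {ι : Pred Name} {P P' : Proc Name PName} (h : Step env (.pre α L P) α' B ι P') :
    α' = α ∧ B = {(clk env P, L)} ∧ ι = emptyPred ∧ P' = P := by
  cases h
  exact ⟨rfl, rfl, rfl, rfl⟩

lemma eschews_emptyPred (B : Blocking Name) : eschews emptyPred B := by
  intro C L _
  exact Set.empty_inter _

lemma not_eschews_of_mem {ι : Pred Name} {B : Blocking Name} {C : Horizon}
    {L : Set (Label Name)} {ℓ : Label Name} (hB : (C, L) ∈ B) (hℓ : ℓ ∈ L)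
    (hι : ℓ.bar ∈ ι C) : ¬ eschews ι B := fun h =>
  (h C L hB).subset ⟨hι, ℓ, hℓ, rfl⟩

lemma neg_mem_chanLabels {A : Set Name} {a : Name} (ha : a ∈ A) :
    Label.neg a ∈ chanLabels A :=
  ⟨a, ha, Or.inr rfl⟩

end General

lemma hasClock_S : HasClock envS (.name PN.S) :=
  .name _ (.sumR _ (.sumR _ (.preClock _ _)))

/-- The prediction `iA(r:{w}.S + σ:{r,w}.S)` of the write transition of `S`. -/
def writePredS : Pred CH := fun _ => {rLab, Label.clock}

lemma writePredS_eq :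
    (fun C => emptyPred C ∪ (iA (.sum (.pre (.lab rLab) {wLab} (.name PN.S))
      (.pre (.lab .clock) {rLab, wLab} (.name PN.S))) \ (Act.lab wLab).labels)) =
      writePredS := by
  funext C
  ext ℓ
  simp only [writePredS, emptyPred, iA, Act.labels, Set.empty_union, Set.mem_sdiff,
    Set.mem_union, Set.mem_singleton_iff, Set.mem_insert_iff]
  constructor
  · exact And.left
  · rintro (rfl | rfl) <;> simp [rLab, wLab]

lemma step_S_inv {α : Act CH} {B : Blocking CH} {ι : Pred CH} {P' : Proc CH PN}
    (h : Step envS (.name PN.S) α B ι P') :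
    P' = .name PN.S ∧ ∃ L, B = {(true, L)} ∧ wLab ∈ L ∧
      ((α = .lab wLab ∧ L = {wLab} ∧ ι = writePredS) ∨ α = .lab rLab ∨ α = .lab .clock) := by
  cases h with
  | con h =>
    cases h with
    | sumL _ h =>
      cases h
      exact ⟨rfl, {wLab}, by rw [clk_of_hasClock hasClock_S], rfl,
        .inl ⟨rfl, rfl, writePredS_eq⟩⟩
    | sumR _ h =>
      cases h with
      | sumL _ h =>
        cases h
        exact ⟨rfl, {wLab}, by rw [clk_of_hasClock hasClock_S], rfl, .inr (.inl rfl)⟩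
      | sumR _ h =>
        cases h
        exact ⟨rfl, {rLab, wLab}, by rw [clk_of_hasClock hasClock_S], by simp,
          .inr (.inr rfl)⟩

lemma step_S_write :
    Step envS (.name PN.S) (.lab wLab) {(true, {wLab})} writePredS (.name PN.S) :=
  writePredS_eq ▸ .con (.sumL _ (.act_of_hasClock _ _ hasClock_S))

lemma iAstar_Rd (C : Horizon) : iAstar envS C Rd = {Label.neg CH.r} := by
  have h (n : ℕ) : wilA envS n C Rd = {Label.neg CH.r} := by
    cases n <;> simp [wilA, wilAgo, Rd, Act.labels]
  simp [iAstar, h]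

lemma neg_w_mem_iAstar_Wr (C : Horizon) : Label.neg CH.w ∈ iAstar envS C Wr :=
  Set.mem_iUnion.2 ⟨0, by simp [wilA, wilAgo, Wr, Act.labels]⟩

/-- The union of the blocking relations of `W`'s `w̄` and `S`'s `w`. -/
def writeBlocking : Blocking CH := {(true, ∅)} ∪ {(true, {wLab})}

lemma step_WS_inv {α : Act CH} {B : Blocking CH} {ι : Pred CH} {Q' : Proc CH PN}
    (h : Step envS (.par Wr (.name PN.S)) α B ι Q') :
    (α = .tau ∧ B = writeBlocking ∧ ι = predAdd emptyPred writePredS ∧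
      Q' = .par (.nil true) (.name PN.S)) ∨ α = .lab (.neg CH.w) := by
  cases h with
  | com hW hS =>
    obtain ⟨hℓ, rfl, rfl, rfl⟩ := hW.pre_inv
    cases hℓ
    obtain ⟨rfl, L, rfl, -, hα⟩ := step_S_inv hS
    rcases hα with ⟨-, rfl, rfl⟩ | hα | hα
    · rw [clk_of_hasClock HasClock.nil]
      exact .inl ⟨rfl, rfl, rfl, rfl⟩
    · cases hα
    · cases hα
  | parL _ hW => exact .inr hW.pre_inv.1
  | parR _ hS _ hesc =>
    obtain ⟨-, L, rfl, hwL, -⟩ := step_S_inv hS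
    exact absurd hesc (not_eschews_of_mem rfl hwL (neg_w_mem_iAstar_Wr true))

lemma step_WS_write : Step envS (.par Wr (.name PN.S)) .tau writeBlocking
    (predAdd emptyPred writePredS) (.par (.nil true) (.name PN.S)) := by
  refine .com (.act_of_hasClock _ _ .nil) step_S_write (eschews_emptyPred _) ?_
  rintro C L ⟨⟩
  simp

lemma eschews_iAstarPred_Rd_writeBlocking : eschews (iAstarPred envS Rd) writeBlocking := by
  rintro C L (⟨⟨⟩⟩ | ⟨⟨⟩⟩) <;> simp [iAstarPred, iAstar_Rd, wLab, Label.bar]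

lemma step_RWS_write : Step envS RWS .tau
    (restrB writeBlocking {CH.r, CH.w})
    (restrPred (predAdd (predAdd emptyPred writePredS) (iAstarPred envS Rd)) {CH.r, CH.w})
    RWS' :=
  .restr _ (.parR Rd step_WS_write nofun eschews_iAstarPred_Rd_writeBlocking) nofun

lemma step_RWS_inv {α : Act CH} {B : Blocking CH} {ι : Pred CH} {Q : Proc CH PN}
    (h : Step envS RWS α B ι Q) :
    α = .tau ∧ B = restrB writeBlocking {CH.r, CH.w} ∧
      ι = restrPred (predAdd (predAdd emptyPred writePredS) (iAstarPred envS Rd))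
        {CH.r, CH.w} ∧ Q = RWS' := by
  cases h with
  | restr _ h hA =>
    cases h with
    | parL _ hR =>
      exact absurd (neg_mem_chanLabels (by simp)) (hA _ hR.pre_inv.1)
    | parR _ hWS =>
      rcases step_WS_inv hWS with ⟨rfl, rfl, rfl, rfl⟩ | hα
      · exact ⟨rfl, rfl, rfl, rfl⟩
      · exact absurd (neg_mem_chanLabels (by simp)) (hA _ hα)
    | com hR hWS =>
      obtain ⟨⟨⟩, -⟩ := hR.pre_inv
      rcases step_WS_inv hWS with ⟨⟨⟩, -⟩ | ⟨⟨⟩⟩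

/-- Write-before-read scheduling: (R ∥ W ∥ S)↾{r,w} has exactly one derivable strategic
transition, a τ-transition arising from the synchronisation of W's w̄ with S's w. -/
theorem write_before_read : UniqueStep envS RWS .tau RWS' :=
  ⟨_, _, step_RWS_write, fun _ _ _ _ h => step_RWS_inv h⟩

end CCSlm
end
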